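/- arXiv:2205.09996 — 2 statements merged into one kernel-verified Lean document; each statement's English description precedes it below -/
import Mathlib

section
/- Fix δ > 0 and m₂ ∈ (0, 1), and set m* = 1 - m₂. There exists a unique pair (σ², m₁) with σ² > 0, m₁ > 0 such that m₁(1 - erf(δ/√(2σ²))) = 1 - m₂ and (2m₁/√π)·(δ/√(2σ²))·exp(-δ²/(2σ²)) = m₂; explicitly σ² = δ²/(2x̄²) and m₁ = m*/(1 - erf(x̄)), where x̄ is the unique positive solution of (2/√π)·x·exp(-x²)/(1 - erf(x)) = (1 - m*)/m*. -/
/-!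
With `x = δ / √(2σ²)` the two equations say exactly that `H x = m₂ / m*` and
`m₁ = m* / (1 - erf x)`, so everything rests on `H` being a bijection of `(0, ∞)`.
Substituting `t = x s` in the Gaussian tail `∫ t in Ioi x, exp (-t ^ 2)` gives
`1 / H x = ∫ s in Ioi 1, exp (-x ^ 2 (s ^ 2 - 1))`, whose integrand decreases strictly in `x`
and is at most `exp (-2 x ^ 2 (s - 1))`. Hence `H` is strictly increasing with `H x ≥ 2 x ^ 2`,
and since `H` is continuous with `H 0 = 0`, it takes every positive value exactly once.
-/

open Real

/-- Error function. -/
noncomputable def erf (x : ℝ) : ℝ := (2 / Real.sqrt π) * ∫ t in (0:ℝ)..x, Real.exp (-t^2)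

/-- The auxiliary function H. -/
noncomputable def H (x : ℝ) : ℝ := (2 / Real.sqrt π) * x * Real.exp (-x^2) / (1 - erf x)

open MeasureTheory Set

lemma setIntegral_lt_setIntegral_of_forall_lt {α : Type*} [MeasurableSpace α] {μ : Measure α}
    {f g : α → ℝ} {s : Set α} (hs : MeasurableSet s) (hμs : μ s ≠ 0)
    (hf : IntegrableOn f s μ) (hg : IntegrableOn g s μ) (hlt : ∀ x ∈ s, f x < g x) :
    ∫ x in s, f x ∂μ < ∫ x in s, g x ∂μ := by
  rw [← sub_pos, ← integral_sub hg hf]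
  refine (setIntegral_pos_iff_support_of_nonneg_ae (f := g - f) ?_ (hg.sub hf)).2 ?_
  · filter_upwards [ae_restrict_mem hs] with x hx using (sub_pos.2 (hlt x hx)).le
  · have hsupp : Function.support (g - f) ∩ s = s :=
      inter_eq_right.2 fun x hx ↦ Function.mem_support.2 (sub_pos.2 (hlt x hx)).ne'
    rw [hsupp]
    exact pos_iff_ne_zero.2 hμs

lemma integrable_exp_neg_sq : Integrable fun t : ℝ ↦ exp (-t ^ 2) := by
  simpa using integrable_exp_neg_mul_sq one_pos

lemma one_sub_erf_eq_integral_Ioi (x : ℝ) :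
    1 - erf x = 2 / √π * ∫ t in Ioi x, exp (-t ^ 2) := by
  have hπ : √π ≠ 0 := (sqrt_pos.2 pi_pos).ne'
  have h0 : ∫ t in Ioi (0 : ℝ), exp (-t ^ 2) = √π / 2 := by
    simpa using integral_gaussian_Ioi 1
  rw [erf, ← intervalIntegral.integral_Ioi_sub_Ioi' integrable_exp_neg_sq.integrableOn
    integrable_exp_neg_sq.integrableOn, h0]
  field_simp
  ring

lemma one_sub_erf_pos (x : ℝ) : 0 < 1 - erf x := by
  rw [one_sub_erf_eq_integral_Ioi]
  have := setIntegral_lt_setIntegral_of_forall_lt (s := Ioi x) measurableSet_Ioi (by simp)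
    integrableOn_zero integrable_exp_neg_sq.integrableOn fun t _ ↦ exp_pos (-t ^ 2)
  rw [integral_zero] at this
  have hπ : 0 < √π := sqrt_pos.2 pi_pos
  positivity

lemma continuous_erf : Continuous erf :=
  continuous_const.mul (integrable_exp_neg_sq.continuous_primitive 0)

lemma continuous_H : Continuous H :=
  .div (by fun_prop) (continuous_const.sub continuous_erf) fun x ↦ (one_sub_erf_pos x).ne'

lemma H_zero : H 0 = 0 := by simp [H]

/-- Substituting `t = x s` in `∫ t in Ioi x, exp (-t ^ 2)` shows that this is `1 / H x`. -/
noncomputable def tailRatio (x : ℝ) : ℝ := ∫ s in Ioi 1, exp (-(x ^ 2 * (s ^ 2 - 1)))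

lemma integrable_tailRatio_integrand {x : ℝ} (hx : x ≠ 0) :
    Integrable fun s : ℝ ↦ exp (-(x ^ 2 * (s ^ 2 - 1))) := by
  convert (integrable_exp_neg_mul_sq (pow_pos (abs_pos.2 hx) 2)).const_mul (exp (x ^ 2)) using 2
  rw [← exp_add, sq_abs]
  ring_nf

lemma integral_Ioi_exp_neg_sq {x : ℝ} (hx : 0 < x) :
    ∫ t in Ioi x, exp (-t ^ 2) = x * exp (-x ^ 2) * tailRatio x := by
  have h := integral_comp_mul_left_Ioi (fun t ↦ exp (-t ^ 2)) 1 hx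
  have hsplit : ∀ s : ℝ, exp (-(x * s) ^ 2) = exp (-x ^ 2) * exp (-(x ^ 2 * (s ^ 2 - 1))) := by
    intro s
    rw [← exp_add]
    ring_nf
  simp only [hsplit, integral_const_mul, mul_one, smul_eq_mul] at h
  rw [tailRatio, mul_assoc, h]
  field_simp

lemma tailRatio_le {x : ℝ} (hx : 0 < x) : tailRatio x ≤ 1 / (2 * x ^ 2) := by
  have hb : -(2 * x ^ 2) < 0 := by nlinarith
  have hbound : ∀ s ∈ Ioi (1 : ℝ),
      exp (-(x ^ 2 * (s ^ 2 - 1))) ≤ exp (2 * x ^ 2) * exp (-(2 * x ^ 2) * s) := by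
    intro s _
    rw [← exp_add]
    exact exp_le_exp.2 (by nlinarith [mul_nonneg (sq_nonneg x) (sq_nonneg (s - 1))])
  calc tailRatio x ≤ ∫ s in Ioi 1, exp (2 * x ^ 2) * exp (-(2 * x ^ 2) * s) :=
        setIntegral_mono_on (integrable_tailRatio_integrand hx.ne').integrableOn
          ((integrableOn_exp_mul_Ioi hb 1).const_mul _) measurableSet_Ioi hbound
    _ = 1 / (2 * x ^ 2) := by
        rw [integral_const_mul, integral_exp_mul_Ioi hb, mul_one, neg_div_neg_eq,
          mul_div_assoc', ← exp_add, add_neg_cancel, exp_zero]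

lemma tailRatio_pos {x : ℝ} (hx : x ≠ 0) : 0 < tailRatio x := by
  have := setIntegral_lt_setIntegral_of_forall_lt (s := Ioi 1) measurableSet_Ioi (by simp)
    integrableOn_zero (integrable_tailRatio_integrand hx).integrableOn
    fun s _ ↦ exp_pos (-(x ^ 2 * (s ^ 2 - 1)))
  rwa [integral_zero] at this

lemma strictAntiOn_tailRatio : StrictAntiOn tailRatio (Ioi 0) := by
  intro a (ha : 0 < a) b (hb : 0 < b) hab
  refine setIntegral_lt_setIntegral_of_forall_lt measurableSet_Ioi (by simp)
    (integrable_tailRatio_integrand hb.ne').integrableOn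
    (integrable_tailRatio_integrand ha.ne').integrableOn fun s hs ↦ ?_
  have hs : 0 < s ^ 2 - 1 := by nlinarith [mem_Ioi.1 hs]
  have hsq : a ^ 2 < b ^ 2 := pow_lt_pow_left₀ hab ha.le two_ne_zero
  exact exp_lt_exp.2 (neg_lt_neg (mul_lt_mul_of_pos_right hsq hs))

lemma H_eq_inv_tailRatio {x : ℝ} (hx : 0 < x) : H x = (tailRatio x)⁻¹ := by
  have hπ : 0 < √π := sqrt_pos.2 pi_pos
  have := tailRatio_pos hx.ne'
  rw [H, one_sub_erf_eq_integral_Ioi, integral_Ioi_exp_neg_sq hx]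
  field_simp

lemma strictMonoOn_H : StrictMonoOn H (Ioi 0) := fun a ha b hb hab ↦ by
  rw [H_eq_inv_tailRatio ha, H_eq_inv_tailRatio hb]
  exact inv_strictAnti₀ (tailRatio_pos (mem_Ioi.1 hb).ne') (strictAntiOn_tailRatio ha hb hab)

lemma two_mul_sq_le_H {x : ℝ} (hx : 0 < x) : 2 * x ^ 2 ≤ H x := by
  rw [H_eq_inv_tailRatio hx, ← one_div, le_one_div (by positivity) (tailRatio_pos hx.ne')]
  exact tailRatio_le hx

lemma surjOn_H : SurjOn H (Ioi 0) (Ioi 0) := by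
  intro c (hc : 0 < c)
  have hM : 0 < c + 1 := by linarith
  have hcM : c < H (c + 1) := by nlinarith [two_mul_sq_le_H hM]
  obtain ⟨x, hx, rfl⟩ := intermediate_value_Ioo hM.le continuous_H.continuousOn
    (by rw [H_zero]; exact ⟨hc, hcM⟩)
  exact ⟨x, hx.1, rfl⟩

lemma moment_equations_iff {a b m x : ℝ} (ha : a ≠ 0) :
    (m * (1 - erf x) = a ∧ 2 * m / √π * x * exp (-x ^ 2) = b) ↔
      (H x = b / a ∧ m = a / (1 - erf x)) := by
  have hE := (one_sub_erf_pos x).ne'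
  have hH : 2 / √π * x * exp (-x ^ 2) = H x * (1 - erf x) := by rw [H, div_mul_cancel₀ _ hE]
  have hsplit : 2 * m / √π * x * exp (-x ^ 2) = m * (2 / √π * x * exp (-x ^ 2)) := by ring
  rw [hsplit, hH]
  constructor
  · rintro ⟨h₁, h₂⟩
    refine ⟨?_, (eq_div_iff hE).2 h₁⟩
    rw [eq_div_iff ha, ← h₁, ← h₂]
    ring
  · rintro ⟨hHx, rfl⟩
    refine ⟨div_mul_cancel₀ _ hE, ?_⟩
    rw [hHx]
    field_simp

lemma neg_sq_div_two_mul_eq {δ σ : ℝ} (hσ : 0 ≤ σ) :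
    -δ ^ 2 / (2 * σ) = -(δ / √(2 * σ)) ^ 2 := by
  rw [div_pow, sq_sqrt (by positivity), neg_div]

lemma div_sqrt_two_mul_sq_div_two_mul_sq {δ x : ℝ} (hδ : 0 < δ) (hx : 0 < x) :
    δ / √(2 * (δ ^ 2 / (2 * x ^ 2))) = x := by
  rw [show 2 * (δ ^ 2 / (2 * x ^ 2)) = (δ / x) ^ 2 by field_simp, sqrt_sq (by positivity)]
  field_simp

/-- The moment equations for `p = (σ², m₁)`, with right-hand sides `a = m*` and `b = 1 - m*`. -/
def IsMomentSolution (δ a b : ℝ) (p : ℝ × ℝ) : Prop :=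
  0 < p.1 ∧ 0 < p.2 ∧ p.2 * (1 - erf (δ / √(2 * p.1))) = a ∧
    (2 * p.2 / √π) * (δ / √(2 * p.1)) * exp (-δ ^ 2 / (2 * p.1)) = b

lemma isMomentSolution_of_H_eq {δ a b x : ℝ} (hδ : 0 < δ) (ha : 0 < a) (hx : 0 < x)
    (hH : H x = b / a) : IsMomentSolution δ a b (δ ^ 2 / (2 * x ^ 2), a / (1 - erf x)) := by
  have hσ : 0 < δ ^ 2 / (2 * x ^ 2) := by positivity
  refine ⟨hσ, div_pos ha (one_sub_erf_pos x), ?_⟩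
  rw [neg_sq_div_two_mul_eq hσ.le, div_sqrt_two_mul_sq_div_two_mul_sq hδ hx]
  exact (moment_equations_iff ha.ne').2 ⟨hH, rfl⟩

lemma IsMomentSolution.eq {δ a b x : ℝ} {p : ℝ × ℝ} (hp : IsMomentSolution δ a b p)
    (hδ : 0 < δ) (ha : a ≠ 0) (hx : 0 < x) (hH : H x = b / a) :
    p = (δ ^ 2 / (2 * x ^ 2), a / (1 - erf x)) := by
  obtain ⟨hσ, -, h₁, h₂⟩ := hp
  rw [neg_sq_div_two_mul_eq hσ.le] at h₂
  obtain ⟨hHp, hm⟩ := (moment_equations_iff ha).1 ⟨h₁, h₂⟩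
  have hxp : δ / √(2 * p.1) = x :=
    strictMonoOn_H.injOn (div_pos hδ (sqrt_pos.2 (by positivity))) hx (hHp.trans hH.symm)
  have hsq := neg_sq_div_two_mul_eq (δ := δ) hσ.le
  rw [hxp] at hm hsq
  refine Prod.ext ?_ hm
  field_simp at hsq ⊢
  linarith

theorem stmt6 (δ m₂ : ℝ) (hδ : 0 < δ) (hm₂ : m₂ ∈ Set.Ioo (0:ℝ) 1) :
    (∃! p : ℝ × ℝ, 0 < p.1 ∧ 0 < p.2 ∧
        p.2 * (1 - erf (δ / Real.sqrt (2 * p.1))) = 1 - m₂ ∧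
        (2 * p.2 / Real.sqrt π) * (δ / Real.sqrt (2 * p.1)) * Real.exp (-δ^2 / (2 * p.1)) = m₂)
    ∧ ∀ xbar : ℝ, 0 < xbar → H xbar = (1 - (1 - m₂)) / (1 - m₂) →
        (∀ p : ℝ × ℝ, (0 < p.1 ∧ 0 < p.2 ∧
            p.2 * (1 - erf (δ / Real.sqrt (2 * p.1))) = 1 - m₂ ∧
            (2 * p.2 / Real.sqrt π) * (δ / Real.sqrt (2 * p.1)) * Real.exp (-δ^2 / (2 * p.1)) = m₂)
          → p = (δ^2 / (2 * xbar^2), (1 - m₂) / (1 - erf xbar))) := by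
  obtain ⟨hm₀, hm₁⟩ := hm₂
  have ha : 0 < 1 - m₂ := sub_pos.2 hm₁
  obtain ⟨x₀, hx₀, hHx₀⟩ := surjOn_H (div_pos hm₀ ha : m₂ / (1 - m₂) ∈ Ioi 0)
  refine ⟨⟨_, isMomentSolution_of_H_eq hδ ha hx₀ hHx₀,
    fun p hp ↦ IsMomentSolution.eq hp hδ ha.ne' hx₀ hHx₀⟩, fun x hx hH p hp ↦ ?_⟩
  rw [sub_sub_cancel] at hH
  exact IsMomentSolution.eq hp hδ ha.ne' hx hH
end

section
/- For any λ ≠ 0, the quantity δ(λ) = 1/λ + 1/(1 - exp(λ)) lies in the open interval (0, 1); moreover δ(λ) → 1/2 as λ → 0. -/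
/-!
Writing `δ(λ) = (e^λ - 1 - λ) / (λ (e^λ - 1))`, positivity is `e^λ > 1 + λ`, and the symmetry
`δ(-λ) = 1 - δ(λ)` turns positivity into `δ < 1`. Near `0`, `δ` is the product of
`(e^λ - 1 - λ) / λ² → 1/2` (L'Hôpital) and `λ / (e^λ - 1) → 1` (the derivative of `exp` at `0`).
-/

open Filter Topology Real

noncomputable def changCooperWeight (l : ℝ) : ℝ := 1 / l + 1 / (1 - exp l)

lemma exp_sub_one_ne_zero {l : ℝ} (hl : l ≠ 0) : exp l - 1 ≠ 0 :=
  sub_ne_zero.2 (mt (exp_eq_one_iff l).1 hl)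

lemma mul_exp_sub_one_pos {l : ℝ} (hl : l ≠ 0) : 0 < l * (exp l - 1) := by
  rcases hl.lt_or_gt with h | h
  · exact mul_pos_of_neg_of_neg h (sub_neg.2 (exp_lt_one_iff.2 h))
  · exact mul_pos h (sub_pos.2 (one_lt_exp_iff.2 h))

lemma changCooperWeight_eq {l : ℝ} (hl : l ≠ 0) :
    changCooperWeight l = (exp l - 1 - l) / (l * (exp l - 1)) := by
  have h := exp_sub_one_ne_zero hl
  have h' : 1 - exp l ≠ 0 := by rwa [← neg_sub, neg_ne_zero]
  rw [changCooperWeight]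
  field_simp
  ring

lemma changCooperWeight_neg {l : ℝ} (hl : l ≠ 0) :
    changCooperWeight (-l) = 1 - changCooperWeight l := by
  have h := exp_sub_one_ne_zero hl
  have h' : 1 - exp l ≠ 0 := by rwa [← neg_sub, neg_ne_zero]
  have hinv : 1 - (exp l)⁻¹ = (exp l - 1) / exp l := by field_simp
  rw [changCooperWeight, changCooperWeight, exp_neg, hinv]
  field_simp
  ring

lemma changCooperWeight_pos {l : ℝ} (hl : l ≠ 0) : 0 < changCooperWeight l := by
  rw [changCooperWeight_eq hl]
  have := add_one_lt_exp hl
  exact div_pos (by linarith) (mul_exp_sub_one_pos hl)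

lemma changCooperWeight_lt_one {l : ℝ} (hl : l ≠ 0) : changCooperWeight l < 1 := by
  have := changCooperWeight_pos (neg_ne_zero.2 hl)
  rw [changCooperWeight_neg hl] at this
  linarith

lemma tendsto_exp_sub_one_div_self :
    Tendsto (fun x => (exp x - 1) / x) (𝓝[≠] 0) (𝓝 1) :=
  exp_zero ▸ (hasDerivAt_exp 0).tendsto_slope.congr fun x => by simp [slope_def_field]

lemma tendsto_exp_sub_one_sub_self_div_sq :
    Tendsto (fun x => (exp x - 1 - x) / x ^ 2) (𝓝[≠] 0) (𝓝 (1 / 2)) := by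
  refine HasDerivAt.lhopital_zero_nhdsNE (f' := fun x => exp x - 1) (g' := fun x => 2 * x)
    ?_ ?_ ?_ ?_ ?_ ?_
  · exact .of_forall fun x => ((hasDerivAt_exp x).sub_const 1).sub (hasDerivAt_id x)
  · exact .of_forall fun x => by simpa using hasDerivAt_pow 2 x
  · filter_upwards [self_mem_nhdsWithin] with x hx
    exact mul_ne_zero two_ne_zero hx
  · exact ((by fun_prop : Continuous fun x => exp x - 1 - x).tendsto' 0 0 (by simp)).mono_left
      nhdsWithin_le_nhds
  · exact ((continuous_pow 2).tendsto' (0 : ℝ) 0 (by simp)).mono_left nhdsWithin_le_nhds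
  · refine (tendsto_exp_sub_one_div_self.div_const 2).congr fun x => ?_
    rw [div_div, mul_comm]

lemma tendsto_changCooperWeight : Tendsto changCooperWeight (𝓝[≠] 0) (𝓝 (1 / 2)) := by
  have h := tendsto_exp_sub_one_sub_self_div_sq.mul (tendsto_exp_sub_one_div_self.inv₀ one_ne_zero)
  rw [inv_one, mul_one] at h
  refine h.congr' ?_
  filter_upwards [self_mem_nhdsWithin] with x hx
  rw [changCooperWeight_eq hx]
  field_simp

theorem stmt17 :
    (∀ l : ℝ, l ≠ 0 → (1 / l + 1 / (1 - Real.exp l)) ∈ Set.Ioo (0:ℝ) 1)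
    ∧ Tendsto (fun l : ℝ => 1 / l + 1 / (1 - Real.exp l))
        (nhdsWithin 0 {(0:ℝ)}ᶜ) (nhds (1/2)) :=
  ⟨fun _ hl => ⟨changCooperWeight_pos hl, changCooperWeight_lt_one hl⟩,
    tendsto_changCooperWeight⟩
end
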